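/- For any positive real θ and positive integer n, log(1 + n/θ) + n/(2θ(n+θ)) ≤ ∑_{i=1}^n 1/(θ+i-1) ≤ log(1 + n/θ) + n/(θ(n+θ)). -/

import Mathlib

/-!
Summing the bounds `(x + 1)⁻¹ ≤ log (x + 1) - log x ≤ (x⁻¹ + (x + 1)⁻¹) / 2` over `x = θ + i`
gives the claim: the sums of `log (x + 1) - log x` and of `x⁻¹ - (x + 1)⁻¹` telescope to
`log (1 + n / θ)` and `n / (θ (n + θ))`. The upper estimate for the logarithm is `u ≤ sinh u`
at `u = log (1 + 1 / x)`.
-/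

open Real Finset

namespace Real

lemma log_le_half_sub_inv {y : ℝ} (hy : 1 ≤ y) : log y ≤ (y - y⁻¹) / 2 := by
  rw [← sinh_log (by linarith)]
  exact self_le_sinh_iff.mpr (log_nonneg hy)

lemma log_add_one_sub_log_le {x : ℝ} (hx : 0 < x) :
    log (x + 1) - log x ≤ (x⁻¹ + (x + 1)⁻¹) / 2 := by
  have hx1 : 0 < x + 1 := by linarith
  rw [← log_div hx1.ne' hx.ne']
  calc log ((x + 1) / x) ≤ ((x + 1) / x - ((x + 1) / x)⁻¹) / 2 :=
        log_le_half_sub_inv ((one_le_div hx).mpr (by linarith))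
    _ = (x⁻¹ + (x + 1)⁻¹) / 2 := by field_simp; ring

lemma inv_add_one_le_log_add_one_sub_log {x : ℝ} (hx : 0 < x) :
    (x + 1)⁻¹ ≤ log (x + 1) - log x := by
  have hx1 : 0 < x + 1 := by linarith
  rw [← log_div hx1.ne' hx.ne']
  calc (x + 1)⁻¹ = 1 - ((x + 1) / x)⁻¹ := by field_simp; ring
    _ ≤ log ((x + 1) / x) := one_sub_inv_le_log_of_pos (by positivity)

end Real

section HarmonicShift

variable {θ : ℝ}

lemma log_add_sub_log_add_half_le_sum_inv (hθ : 0 < θ) (n : ℕ) :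
    log (θ + n) - log θ + (θ⁻¹ - (θ + n)⁻¹) / 2 ≤ ∑ i ∈ range n, (θ + i)⁻¹ := by
  have step (i : ℕ) :
      (log (θ + ↑(i + 1)) - (θ + ↑(i + 1))⁻¹ / 2) - (log (θ + i) - (θ + i)⁻¹ / 2) ≤
        (θ + i)⁻¹ := by
    have := log_add_one_sub_log_le (x := θ + i) (by positivity)
    push_cast
    rw [← add_assoc]
    linarith
  calc log (θ + n) - log θ + (θ⁻¹ - (θ + n)⁻¹) / 2
      = (log (θ + n) - (θ + n)⁻¹ / 2) - (log (θ + (0 : ℕ)) - (θ + (0 : ℕ))⁻¹ / 2) := by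
        rw [Nat.cast_zero, add_zero]; ring
    _ = ∑ i ∈ range n, ((log (θ + ↑(i + 1)) - (θ + ↑(i + 1))⁻¹ / 2) -
          (log (θ + i) - (θ + i)⁻¹ / 2)) :=
        (sum_range_sub (fun i : ℕ ↦ log (θ + i) - (θ + i)⁻¹ / 2) n).symm
    _ ≤ ∑ i ∈ range n, (θ + i)⁻¹ := sum_le_sum fun i _ ↦ step i

lemma sum_inv_le_log_add_sub_log_add (hθ : 0 < θ) (n : ℕ) :
    ∑ i ∈ range n, (θ + i)⁻¹ ≤ log (θ + n) - log θ + (θ⁻¹ - (θ + n)⁻¹) := by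
  have step (i : ℕ) :
      (θ + i)⁻¹ ≤
        (log (θ + ↑(i + 1)) - (θ + ↑(i + 1))⁻¹) - (log (θ + i) - (θ + i)⁻¹) := by
    have := inv_add_one_le_log_add_one_sub_log (x := θ + i) (by positivity)
    push_cast
    rw [← add_assoc]
    linarith
  calc ∑ i ∈ range n, (θ + i)⁻¹
      ≤ ∑ i ∈ range n, ((log (θ + ↑(i + 1)) - (θ + ↑(i + 1))⁻¹) -
          (log (θ + i) - (θ + i)⁻¹)) := sum_le_sum fun i _ ↦ step i
    _ = (log (θ + n) - (θ + n)⁻¹) - (log (θ + (0 : ℕ)) - (θ + (0 : ℕ))⁻¹) :=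
        sum_range_sub (fun i : ℕ ↦ log (θ + i) - (θ + i)⁻¹) n
    _ = log (θ + n) - log θ + (θ⁻¹ - (θ + n)⁻¹) := by rw [Nat.cast_zero, add_zero]; ring

end HarmonicShift

theorem stmt_0 (θ : ℝ) (hθ : 0 < θ) (n : ℕ) :
    Real.log (1 + n / θ) + n / (2 * θ * (n + θ)) ≤
      ∑ i ∈ Finset.range n, 1 / (θ + i) ∧
    ∑ i ∈ Finset.range n, 1 / (θ + i) ≤
      Real.log (1 + n / θ) + n / (θ * (n + θ)) := by
  have hθn : 0 < θ + n := by positivity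
  have hlog : log (1 + n / θ) = log (θ + n) - log θ := by
    rw [← log_div hθn.ne' hθ.ne']
    congr 1
    field_simp
  have hinv : (n : ℝ) / (θ * (n + θ)) = θ⁻¹ - (θ + n)⁻¹ := by
    field_simp
    ring
  have hhalf : (n : ℝ) / (2 * θ * (n + θ)) = (θ⁻¹ - (θ + n)⁻¹) / 2 := by
    rw [← hinv]
    field_simp
  simp only [one_div]
  rw [hlog, hinv, hhalf]
  exact ⟨log_add_sub_log_add_half_le_sum_inv hθ n, sum_inv_le_log_add_sub_log_add hθ n⟩
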